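/- Fix integers n and m and a positive integer N. Then: the sequence k ↦ F_n^k(N + A_n) tends to +∞ if and only if k ↦ F_m^k(N + A_m) tends to +∞; it tends to -∞ if and only if k ↦ F_m^k(N + A_m) tends to -∞; and it is bounded if and only if k ↦ F_m^k(N + A_m) is bounded. -/
import Mathlib


def F (n : ℤ) (P : ℤ) : ℤ := if Even P then (3 * P - 2 * n) / 2 else (P + 2 * n + 1) / 2

def A (n : ℤ) : ℤ := 2 * n + 1

def T (P : ℤ) : ℤ := if Even P then P / 2 else (3 * P + 1) / 2

lemma fconj (n P : ℤ) : F n (P + A n) = T P + A n := by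
  simp only [F, T, A, Int.even_iff]
  split_ifs <;> omega

lemma iter_conj (n P : ℤ) (k : ℕ) : (F n)^[k] (P + A n) = T^[k] P + A n := by
  induction k with
  | zero => simp
  | succ k ih =>
    rw [Function.iterate_succ_apply', Function.iterate_succ_apply', ih, fconj]

lemma shiftTop (f : ℕ → ℤ) (a : ℤ) :
    Filter.Tendsto (fun k => f k + a) Filter.atTop Filter.atTop ↔
      Filter.Tendsto f Filter.atTop Filter.atTop := by
  constructor
  · intro h
    have := Filter.tendsto_atTop_add_const_right Filter.atTop (-a) h
    simpa using this
  · exact Filter.tendsto_atTop_add_const_right Filter.atTop a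

lemma shiftBot (f : ℕ → ℤ) (a : ℤ) :
    Filter.Tendsto (fun k => f k + a) Filter.atTop Filter.atBot ↔
      Filter.Tendsto f Filter.atTop Filter.atBot := by
  constructor
  · intro h
    have := Filter.tendsto_atBot_add_const_right Filter.atTop (-a) h
    simpa using this
  · exact Filter.tendsto_atBot_add_const_right Filter.atTop a

lemma shiftBdd (f : ℕ → ℤ) (a : ℤ) :
    (∃ C : ℤ, ∀ k : ℕ, |f k + a| ≤ C) ↔ (∃ C : ℤ, ∀ k : ℕ, |f k| ≤ C) := by
  constructor
  · rintro ⟨C, hC⟩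
    refine ⟨C + |a|, fun k => ?_⟩
    have h1 := hC k
    have h2 : |f k| ≤ |f k + a| + |a| := by
      simpa using abs_sub (f k + a) a
    omega
  · rintro ⟨C, hC⟩
    refine ⟨C + |a|, fun k => ?_⟩
    have h1 := hC k
    have h2 := abs_add_le (f k) a
    omega

theorem stmt_6 (n m : ℤ) (N : ℤ) (hN : 0 < N) :
    (Filter.Tendsto (fun k : ℕ => (F n)^[k] (N + A n)) Filter.atTop Filter.atTop ↔
      Filter.Tendsto (fun k : ℕ => (F m)^[k] (N + A m)) Filter.atTop Filter.atTop) ∧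
    (Filter.Tendsto (fun k : ℕ => (F n)^[k] (N + A n)) Filter.atTop Filter.atBot ↔
      Filter.Tendsto (fun k : ℕ => (F m)^[k] (N + A m)) Filter.atTop Filter.atBot) ∧
    ((∃ C : ℤ, ∀ k : ℕ, |(F n)^[k] (N + A n)| ≤ C) ↔
      (∃ C : ℤ, ∀ k : ℕ, |(F m)^[k] (N + A m)| ≤ C)) := by
  simp only [iter_conj]
  exact ⟨(shiftTop (fun k => T^[k] N) (A n)).trans (shiftTop _ (A m)).symm,
    (shiftBot (fun k => T^[k] N) (A n)).trans (shiftBot _ (A m)).symm,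
    (shiftBdd (fun k => T^[k] N) (A n)).trans (shiftBdd _ (A m)).symm⟩
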